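/- arXiv:1904.01370 — 3 statements merged into one kernel-verified Lean document; each statement's English description precedes it below -/
import Mathlib

section
/- Let X_α, α ∈ ℕ, be a countable family of proper linear subspaces of ℝ^n (X_α ≠ ℝ^n for every α). Then there exists a full-rank lattice L ⊂ ℝ^n (i.e., L = A(ℤ^n) for some invertible linear map A : ℝ^n → ℝ^n) such that L ∩ X_α = {0} for all α ∈ ℕ. -/
/-!
For a nonzero integer vector `m`, the operators `A` with `A m ∈ X_α` form a proper, hence closed
and nowhere dense, subspace of the finite-dimensional space of operators on `ℝⁿ`. By Baire's
theorem these countably many subspaces cannot cover the nonempty open set of invertible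
operators, and any invertible operator outside all of them maps `ℤⁿ` to the required lattice.
-/

open Set

theorem IsOpen.exists_forall_notMem_of_submodule_ne_top {𝕜 E ι : Type*}
    [NontriviallyNormedField 𝕜] [CompleteSpace 𝕜] [NormedAddCommGroup E] [NormedSpace 𝕜 E]
    [FiniteDimensional 𝕜 E] [Countable ι] {U : Set E} (hU : IsOpen U) (hU' : U.Nonempty)
    (S : ι → Submodule 𝕜 E) (hS : ∀ i, S i ≠ ⊤) : ∃ x ∈ U, ∀ i, x ∉ S i := by
  have := FiniteDimensional.complete 𝕜 E
  have hdense : Dense (⋂ i, (S i : Set E)ᶜ) := by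
    refine dense_iInter_of_isOpen (fun i ↦ (S i).closed_of_finiteDimensional.isOpen_compl)
      fun i ↦ interior_eq_empty_iff_dense_compl.1 ?_
    exact not_nonempty_iff_eq_empty.1 (mt (S i).eq_top_of_nonempty_interior' (hS i))
  obtain ⟨x, hxU, hx⟩ := hdense.inter_open_nonempty U hU hU'
  exact ⟨x, hxU, mem_iInter.1 hx⟩

section Evaluation

variable {𝕜 E F : Type*} [NontriviallyNormedField 𝕜] [NormedAddCommGroup E] [NormedSpace 𝕜 E]
  [SeparatingDual 𝕜 E] [NormedAddCommGroup F] [NormedSpace 𝕜 F] {v : E}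

theorem ContinuousLinearMap.apply_surjective (hv : v ≠ 0) :
    Function.Surjective (ContinuousLinearMap.apply 𝕜 F v) := by
  obtain ⟨f, hf⟩ := SeparatingDual.exists_eq_one (R := 𝕜) hv
  exact fun y ↦ ⟨f.smulRight y, by simp [hf]⟩

theorem Submodule.comap_apply_ne_top (hv : v ≠ 0) {X : Submodule 𝕜 F} (hX : X ≠ ⊤) :
    X.comap (ContinuousLinearMap.apply 𝕜 F v).toLinearMap ≠ ⊤ := by
  rw [← comap_top (ContinuousLinearMap.apply 𝕜 F v).toLinearMap]
  exact (comap_injective_of_surjective (ContinuousLinearMap.apply_surjective hv)).ne hX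

end Evaluation

section IntegerPoints

variable {ι R : Type*} [Ring R]

theorem setOf_forall_exists_intCast_eq :
    {x : ι → R | ∀ i, ∃ m : ℤ, x i = m} = range fun m : ι → ℤ ↦ ((↑) ∘ m : ι → R) := by
  ext x
  simp only [mem_ofPred_eq, mem_range, Classical.skolem, funext_iff, Function.comp_apply, eq_comm]

theorem image_range_intCast_inter_eq_zero {F : Type*} [AddCommGroup F] [Module R F]
    (A : (ι → R) →ₗ[R] F) (X : Submodule R F) (hA : ∀ m : ι → ℤ, m ≠ 0 → A ((↑) ∘ m) ∉ X) :
    A '' range (fun m : ι → ℤ ↦ ((↑) ∘ m : ι → R)) ∩ X = {0} := by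
  ext y
  constructor
  · rintro ⟨⟨_, ⟨m, rfl⟩, rfl⟩, hy⟩
    obtain rfl : m = 0 := by_contra fun hm ↦ hA m hm hy
    simp
  · rintro rfl
    exact ⟨⟨0, ⟨0, by simp⟩, map_zero A⟩, X.zero_mem⟩

end IntegerPoints

/-- **Existence of a lattice avoiding countably many proper subspaces.**
Given a countable family `X_α`, `α ∈ ℕ`, of proper linear subspaces of `ℝⁿ`, there is a
full-rank lattice `L = A(ℤⁿ)` (with `A` an invertible linear map) such that
`L ∩ X_α = {0}` for every `α`. -/
theorem exists_lattice_avoiding_proper_subspaces {n : ℕ}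
    (X : ℕ → Submodule ℝ (Fin n → ℝ)) (hX : ∀ α : ℕ, X α ≠ ⊤) :
    ∃ A : (Fin n → ℝ) ≃ₗ[ℝ] (Fin n → ℝ),
      ∀ α : ℕ,
        ((A : (Fin n → ℝ) → (Fin n → ℝ)) '' {x | ∀ i, ∃ m : ℤ, x i = (m : ℝ)}) ∩
          (X α : Set (Fin n → ℝ)) = {0} := by
  have hcast (m : Fin n → ℤ) (hm : m ≠ 0) : ((↑) ∘ m : Fin n → ℝ) ≠ 0 := by
    simpa [funext_iff] using hm
  obtain ⟨A, hA, hAX⟩ := Units.isOpen.exists_forall_notMem_of_submodule_ne_top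
    ⟨(1 : (Fin n → ℝ) →L[ℝ] (Fin n → ℝ)), isUnit_one⟩
    (fun p : ℕ × {m : Fin n → ℤ // m ≠ 0} ↦
      (X p.1).comap (ContinuousLinearMap.apply ℝ (Fin n → ℝ) ((↑) ∘ p.2.1 : Fin n → ℝ)).toLinearMap)
    fun p ↦ Submodule.comap_apply_ne_top (hcast _ p.2.2) (hX p.1)
  refine ⟨(ContinuousLinearEquiv.ofUnit hA.unit).toLinearEquiv, fun α ↦ ?_⟩
  rw [setOf_forall_exists_intCast_eq]
  exact image_range_intCast_inter_eq_zero A.toLinearMap _ fun m hm ↦ hAX (α, ⟨m, hm⟩)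
end

section
/- Let φ : ℝ → ℝ^n be continuous and let F ⊂ ℝ be the set of points u₀ such that φ is not affine on any neighborhood of u₀. Then there exists a full-rank lattice L ⊂ ℝ^n with dual lattice L' = {ξ ∈ ℝ^n : ξ·x ∈ ℤ for all x ∈ L} such that for every ξ ∈ L', ξ ≠ 0, and every nonempty open interval (a,b) with (a,b) ∩ F ≠ ∅, the scalar function u ↦ ξ·φ(u) is not affine on (a,b). -/
/-!
For an interval `I` meeting `F`, the vectors `ξ` for which `u ↦ ⟪ξ, φ u⟫` is affine on `I` form a
proper subspace `V_I`, since otherwise every coordinate of `φ`, hence `φ` itself, would be affine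
on `I`. The dual lattice of `A(ℤⁿ)` is `B(ℤⁿ)` for `B = (A†)⁻¹`, so it suffices to find an
invertible `B` with `B ψ ∉ V_I` for every nonzero integer vector `ψ` and every interval `I` with
rational endpoints meeting `F`. For fixed `ψ ≠ 0` and `I`, the operators `B` with `B ψ ∈ V_I` form
a proper, hence nowhere dense, subspace of `End(ℝⁿ)`; there are countably many of them, so by
Baire's theorem they miss some point of the open set of invertible operators.
-/

open Set Topology RealInnerProductSpace

/-- `φ` is affine on the set `I ⊆ ℝ`: `φ(u) = u • c + d` on `I` for some vectors `c, d`. -/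
def IsAffineOn {n : ℕ} (φ : ℝ → EuclideanSpace ℝ (Fin n)) (I : Set ℝ) : Prop :=
  ∃ c d : EuclideanSpace ℝ (Fin n), ∀ u ∈ I, φ u = u • c + d

/-- The set `F` of points `u₀ ∈ ℝ` such that `φ` is not affine on any neighborhood
of `u₀`. -/
def nonAffinitySet {n : ℕ} (φ : ℝ → EuclideanSpace ℝ (Fin n)) : Set ℝ :=
  {u₀ | ∀ s ∈ 𝓝 u₀, ¬ IsAffineOn φ s}

theorem Submodule.dense_iInter_compl {R M ι : Type*} [Ring R] [TopologicalSpace R]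
    [Filter.NeBot (𝓝[{x : R | IsUnit x}] 0)] [AddCommGroup M] [TopologicalSpace M] [ContinuousAdd M]
    [Module R M] [ContinuousSMul R M] [BaireSpace M] [Countable ι] {W : ι → Submodule R M}
    (hclosed : ∀ i, IsClosed (W i : Set M)) (hW : ∀ i, W i ≠ ⊤) :
    Dense (⋂ i, (W i : Set M)ᶜ) := by
  refine dense_iInter_of_isOpen (fun i => (hclosed i).isOpen_compl) fun i => ?_
  rw [← interior_eq_empty_iff_dense_compl, ← not_nonempty_iff_eq_empty]
  exact fun h => hW i ((W i).eq_top_of_nonempty_interior' h)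

section

variable {𝕜 E : Type*} [RCLike 𝕜] [NormedAddCommGroup E] [NormedSpace 𝕜 E]

theorem Submodule.comap_apply_ne_top_s8 {ψ : E} (hψ : ψ ≠ 0) {V : Submodule 𝕜 E} (hV : V ≠ ⊤) :
    V.comap (ContinuousLinearMap.apply 𝕜 E ψ).toLinearMap ≠ ⊤ := by
  obtain ⟨v, hv⟩ : ∃ v, v ∉ V := by simpa [Submodule.eq_top_iff'] using hV
  obtain ⟨f, hf⟩ := SeparatingDual.exists_eq_one (R := 𝕜) hψ
  exact fun h => hv (by simpa [hf] using Submodule.eq_top_iff'.1 h (f.smulRight v))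

variable [FiniteDimensional 𝕜 E]

theorem exists_unit_apply_notMem {ι : Type*} [Countable ι] {ψ : ι → E} {V : ι → Submodule 𝕜 E}
    (hψ : ∀ i, ψ i ≠ 0) (hV : ∀ i, V i ≠ ⊤) :
    ∃ B : (E →L[𝕜] E)ˣ, ∀ i, (B : E →L[𝕜] E) (ψ i) ∉ V i := by
  have := FiniteDimensional.complete 𝕜 E
  let W i := (V i).comap (ContinuousLinearMap.apply 𝕜 E (ψ i)).toLinearMap
  have hdense : Dense (⋂ i, (W i : Set (E →L[𝕜] E))ᶜ) :=
    Submodule.dense_iInter_compl (fun i => (W i).closed_of_finiteDimensional)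
      fun i => Submodule.comap_apply_ne_top_s8 (hψ i) (hV i)
  obtain ⟨B, hB, hBunit⟩ := hdense.exists_mem_open Units.isOpen ⟨1, isUnit_one⟩
  exact ⟨hBunit.unit, mem_iInter.1 hB⟩

end

def affineDirections {E : Type*} [NormedAddCommGroup E] [InnerProductSpace ℝ E] (φ : ℝ → E)
    (I : Set ℝ) : Submodule ℝ E where
  carrier := {ξ | ∃ c d : ℝ, ∀ u ∈ I, ⟪ξ, φ u⟫ = c * u + d}
  add_mem' := by
    rintro ξ η ⟨c, d, h⟩ ⟨c', d', h'⟩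
    exact ⟨c + c', d + d', fun u hu => by rw [inner_add_left, h u hu, h' u hu]; ring⟩
  zero_mem' := ⟨0, 0, fun u _ => by simp⟩
  smul_mem' := by
    rintro t ξ ⟨c, d, h⟩
    exact ⟨t * c, t * d, fun u hu => by rw [real_inner_smul_left, h u hu]; ring⟩

theorem affineDirections_anti {E : Type*} [NormedAddCommGroup E] [InnerProductSpace ℝ E]
    (φ : ℝ → E) {I J : Set ℝ} (hIJ : I ⊆ J) : affineDirections φ J ≤ affineDirections φ I :=
  fun _ ⟨c, d, h⟩ => ⟨c, d, fun u hu => h u (hIJ hu)⟩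

section

variable {n : ℕ}

theorem isAffineOn_of_affineDirections_eq_top {φ : ℝ → EuclideanSpace ℝ (Fin n)} {I : Set ℝ}
    (h : affineDirections φ I = ⊤) : IsAffineOn φ I := by
  have hcoord (i : Fin n) : EuclideanSpace.single i 1 ∈ affineDirections φ I := h ▸ trivial
  choose c d hcd using hcoord
  refine ⟨WithLp.toLp 2 c, WithLp.toLp 2 d, fun u hu => ?_⟩
  ext i
  simpa [EuclideanSpace.inner_single_left, mul_comm] using hcd i u hu

theorem affineDirections_ne_top {φ : ℝ → EuclideanSpace ℝ (Fin n)} {I : Set ℝ} {u₀ : ℝ}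
    (hu₀ : u₀ ∈ nonAffinitySet φ) (hI : I ∈ 𝓝 u₀) : affineDirections φ I ≠ ⊤ :=
  fun h => hu₀ I hI (isAffineOn_of_affineDirections_eq_top h)

def integerPoints (n : ℕ) : Set (EuclideanSpace ℝ (Fin n)) :=
  {x | ∀ i, ∃ m : ℤ, x i = (m : ℝ)}

theorem countable_integerPoints : (integerPoints n).Countable := by
  refine (countable_range fun m : Fin n → ℤ => WithLp.toLp 2 fun i => (m i : ℝ)).mono fun x hx => ?_
  choose m hm using hx
  exact ⟨m, by ext i; simp [hm i]⟩

theorem single_one_mem_integerPoints (i : Fin n) :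
    EuclideanSpace.single i (1 : ℝ) ∈ integerPoints n := fun j => by
  by_cases h : j = i
  · exact ⟨1, by simp [h]⟩
  · exact ⟨0, by simp [h]⟩

theorem apply_mem_integerPoints_of_inner_adjoint
    {T : EuclideanSpace ℝ (Fin n) →L[ℝ] EuclideanSpace ℝ (Fin n)} {ξ : EuclideanSpace ℝ (Fin n)}
    (h : ∀ x ∈ T.adjoint '' integerPoints n, ∃ m : ℤ, ⟪ξ, x⟫ = m) : T ξ ∈ integerPoints n := by
  intro i
  obtain ⟨m, hm⟩ := h _ ⟨_, single_one_mem_integerPoints i, rfl⟩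
  refine ⟨m, ?_⟩
  rwa [ContinuousLinearMap.adjoint_inner_right, real_inner_comm, EuclideanSpace.inner_single_left,
    map_one, one_mul] at hm

end

theorem exists_lattice_dual_nonaffine_general {n : ℕ}
    (φ : ℝ → EuclideanSpace ℝ (Fin n)) :
    ∃ A : EuclideanSpace ℝ (Fin n) ≃ₗ[ℝ] EuclideanSpace ℝ (Fin n),
      ∀ ξ : EuclideanSpace ℝ (Fin n),
        (∀ x ∈ (A : EuclideanSpace ℝ (Fin n) → EuclideanSpace ℝ (Fin n)) ''
            {x | ∀ i, ∃ m : ℤ, x i = (m : ℝ)}, ∃ m : ℤ, ⟪ξ, x⟫ = (m : ℝ)) →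
        ξ ≠ 0 →
        ∀ a b : ℝ, a < b → (Set.Ioo a b ∩ nonAffinitySet φ).Nonempty →
          ¬ ∃ c d : ℝ, ∀ u ∈ Set.Ioo a b, ⟪ξ, φ u⟫ = c * u + d := by
  set S : Set (ℚ × ℚ × EuclideanSpace ℝ (Fin n)) := {p | p.2.2 ∈ integerPoints n ∧ p.2.2 ≠ 0 ∧
    (Ioo (p.1 : ℝ) p.2.1 ∩ nonAffinitySet φ).Nonempty}
  have : Countable S := ((countable_univ.prod (countable_univ.prod countable_integerPoints)).mono
    fun _ hp => by exact ⟨trivial, trivial, hp.1⟩).to_subtype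
  have hV (p : S) : affineDirections φ (Ioo (p.1.1 : ℝ) p.1.2.1) ≠ ⊤ := by
    obtain ⟨-, -, -, -, hu, hF⟩ := p
    exact affineDirections_ne_top hF (isOpen_Ioo.mem_nhds hu)
  obtain ⟨B, hB⟩ := exists_unit_apply_notMem (ψ := fun p : S => p.1.2.2) (fun p => p.2.2.1) hV
  -- `A = (B⁻¹)†`, so the dual lattice of `A(ℤⁿ)` lies in `B(ℤⁿ)`.
  refine ⟨(ContinuousLinearEquiv.unitsEquiv ℝ _ (star B⁻¹)).toLinearEquiv, ?_⟩
  rintro ξ hξ hξ0 a b - ⟨u₀, ⟨hau₀, hu₀b⟩, hu₀F⟩ hξaff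
  obtain ⟨q, haq, hqu₀⟩ := exists_rat_btwn hau₀
  obtain ⟨r, hu₀r, hrb⟩ := exists_rat_btwn hu₀b
  set e := ContinuousLinearEquiv.unitsEquiv ℝ _ B
  have hψ : e.symm ξ ∈ integerPoints n := apply_mem_integerPoints_of_inner_adjoint hξ
  have hψ0 : e.symm ξ ≠ 0 := by simpa using hξ0
  refine hB ⟨(q, r, e.symm ξ), hψ, hψ0, u₀, ⟨hqu₀, hu₀r⟩, hu₀F⟩ ?_
  rw [← ContinuousLinearEquiv.unitsEquiv_apply, e.apply_symm_apply]
  exact affineDirections_anti φ (Ioo_subset_Ioo haq.le hrb.le) hξaff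

/-- **Choice of a good lattice.** For a continuous flux `φ : ℝ → ℝⁿ` there is a full-rank
lattice `L = A(ℤⁿ)` such that for every nonzero `ξ` in the dual lattice
`L' = {ξ : ξ·x ∈ ℤ ∀ x ∈ L}` and every nonempty interval `(a,b)` meeting `F`, the scalar
function `u ↦ ξ · φ(u)` is not affine on `(a,b)`. -/
theorem exists_lattice_dual_nonaffine {n : ℕ}
    (φ : ℝ → EuclideanSpace ℝ (Fin n)) (hφ : Continuous φ) :
    ∃ A : EuclideanSpace ℝ (Fin n) ≃ₗ[ℝ] EuclideanSpace ℝ (Fin n),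
      ∀ ξ : EuclideanSpace ℝ (Fin n),
        (∀ x ∈ (A : EuclideanSpace ℝ (Fin n) → EuclideanSpace ℝ (Fin n)) ''
            {x | ∀ i, ∃ m : ℤ, x i = (m : ℝ)}, ∃ m : ℤ, ⟪ξ, x⟫ = (m : ℝ)) →
        ξ ≠ 0 →
        ∀ a b : ℝ, a < b → (Set.Ioo a b ∩ nonAffinitySet φ).Nonempty →
          ¬ ∃ c d : ℝ, ∀ u ∈ Set.Ioo a b, ⟪ξ, φ u⟫ = c * u + d :=
  exists_lattice_dual_nonaffine_general φ
end

section
/- Let φ : ℝ → ℝ^n be continuous and suppose there exist b > 0 and c, d ∈ ℝ^n such that φ(u) = u·c + d for all u ∈ [0,b]. Let u₀ ∈ L^∞(ℝ^n) with 0 ≤ u₀(x) ≤ b a.e. Then the traveling wave u(t,x) = u₀(x − tc) is an entropy solution of u_t + div_x φ(u) = 0 with initial data u₀: for every k ∈ ℝ and every nonnegative C¹ function f with compact support in (0,∞)×ℝ^n, ∫∫ [ |u(t,x)−k| ∂_t f + sign(u(t,x)−k)(φ(u(t,x))−φ(k))·∇_x f ] dt dx ≥ 0, and u(t,·) → u₀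 in L¹_loc(ℝ^n) as t → 0+. Moreover ‖u(t,·)‖_X = ‖u₀‖_X for all t ≥ 0, so if u₀ ≠ 0 in L¹_loc then ‖u(t,·)‖_X does not tend to 0 as t → +∞. -/
/-!
Along the lines `x = y + t c` the wave `u(t, x) = u₀(x - t c)` is constant, and on the range
`[0, b]` of `u₀` the flux is affine with slope `c`. So for each `k` there is a vector `w` with
`sign (a - k) (φ a - φ k) = |a - k| c + w` for all `a ∈ [0, b]`, and the Kruzhkov integrand is
`|u₀(x - t c) - k| ∂_{(1,c)} f + ∂_{(0,w)} f`. The second term integrates to zero since `f` has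
compact support; after the measure-preserving shear `(t, y) ↦ (t, y + t c)` the first becomes
`|u₀ y - k| ∂_t (f (t, y + t c))`, which integrates to zero in `t`. So the entropy inequality
holds with equality. Convergence as `t → 0+` is continuity of translation in `L¹`, and `‖·‖_X`
is translation invariant; it vanishes only if `u₀` vanishes a.e. on every unit ball.
-/

open MeasureTheory Filter Set Topology

/-- The norm `‖v‖_X = sup_{y ∈ ℝⁿ} ∫_{|x-y|<1} |v(x)| dx` on `L^∞(ℝⁿ)`. -/
noncomputable def normX {n : ℕ} (v : EuclideanSpace ℝ (Fin n) → ℝ) : ℝ :=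
  ⨆ y : EuclideanSpace ℝ (Fin n), ∫ x in Metric.ball y 1, |v x|

section Translation

variable {E : Type*} [NormedAddCommGroup E] [NormedSpace ℝ E] [FiniteDimensional ℝ E]
  [MeasurableSpace E] [BorelSpace E] {μ : Measure E} [μ.IsAddHaarMeasure]

theorem tendsto_integral_norm_comp_sub_sub {F : Type*} [NormedAddCommGroup F] [NormedSpace ℝ F]
    {v : E → F} (hv : Integrable v μ) :
    Tendsto (fun a => ∫ x, ‖v (x - a) - v x‖ ∂μ) (𝓝 0) (𝓝 0) := by
  let τ : C(E, C(E, E)) := ContinuousMap.curry ⟨fun p : E × E => p.2 - p.1, by fun_prop⟩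
  have hτ (a : E) : MeasurePreserving (τ a) μ μ := measurePreserving_sub_right μ a
  have hv_τ (a : E) : (Lp.compMeasurePreserving (τ a) (hτ a) (hv.toL1 v) : E → F)
      =ᵐ[μ] fun x => v (x - a) :=
    (Lp.coeFn_compMeasurePreserving _ _).trans
      (hv.coeFn_toL1.comp_tendsto (hτ a).quasiMeasurePreserving.tendsto_ae)
  have hcont := (continuous_const (y := hv.toL1 v)).compMeasurePreservingLp τ.continuous hτ
    ENNReal.one_ne_top
  refine (tendsto_iff_dist_tendsto_zero.1 (hcont.tendsto 0)).congr fun a => ?_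
  rw [L1.dist_eq_integral_dist]
  refine integral_congr_ae ?_
  filter_upwards [hv_τ a, hv_τ 0] with x hxa hx0
  rw [dist_eq_norm, hxa, hx0, sub_zero]

theorem tendsto_setIntegral_norm_comp_sub_sub {F : Type*} [NormedAddCommGroup F]
    [NormedSpace ℝ F] {v : E → F} (hv : LocallyIntegrable v μ) {K : Set E} (hK : IsCompact K) :
    Tendsto (fun a => ∫ x in K, ‖v (x - a) - v x‖ ∂μ) (𝓝 0) (𝓝 0) := by
  set K' := Metric.cthickening 1 K
  set w := K'.indicator v
  have hw : Integrable w μ :=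
    (integrable_indicator_iff hK.cthickening.measurableSet).2
      (hv.integrableOn_isCompact hK.cthickening)
  have hsmall : ∀ᶠ a : E in 𝓝 0, ‖a‖ ≤ 1 := by
    filter_upwards [Metric.closedBall_mem_nhds (0 : E) one_pos] with a ha
    simpa using ha
  refine tendsto_of_tendsto_of_tendsto_of_le_of_le' tendsto_const_nhds
    (tendsto_integral_norm_comp_sub_sub hw) (.of_forall fun a => by positivity) ?_
  filter_upwards [hsmall] with a ha
  calc ∫ x in K, ‖v (x - a) - v x‖ ∂μ = ∫ x in K, ‖w (x - a) - w x‖ ∂μ := by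
        refine setIntegral_congr_fun hK.measurableSet fun x hx => ?_
        have hxa : x - a ∈ K' :=
          Metric.mem_cthickening_of_dist_le _ x 1 K hx (by simpa [dist_eq_norm] using ha)
        have hx' : x ∈ K' := Metric.self_subset_cthickening K hx
        simp only [w, indicator_of_mem hxa, indicator_of_mem hx']
    _ ≤ ∫ x, ‖w (x - a) - w x‖ ∂μ :=
        setIntegral_le_integral ((hw.comp_sub_right a).sub hw).norm
          (.of_forall fun _ => by positivity)

end Translation

section NormX

variable {n : ℕ}

theorem normX_comp_sub (v : EuclideanSpace ℝ (Fin n) → ℝ) (a : EuclideanSpace ℝ (Fin n)) :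
    normX (fun x => v (x - a)) = normX v := by
  have hball (y : EuclideanSpace ℝ (Fin n)) :
      ∫ x in Metric.ball y 1, |v (x - a)| = ∫ x in Metric.ball (y - a) 1, |v x| := by
    have hpre : (· - a) ⁻¹' Metric.ball (y - a) 1 = Metric.ball y 1 := by
      ext x; simp
    rw [← (measurePreserving_sub_right volume a).setIntegral_preimage_emb
      (measurableEmbedding_subRight a) (fun x => |v x|), hpre]
  simp only [normX, hball]
  exact (Equiv.subRight a).surjective.iSup_comp fun y => ∫ x in Metric.ball y 1, |v x|

theorem ae_eq_zero_of_normX_eq_zero {v : EuclideanSpace ℝ (Fin n) → ℝ}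
    (hv : AEStronglyMeasurable v volume) {C : ℝ} (hC : ∀ᵐ x, |v x| ≤ C) (h : normX v = 0) :
    v =ᵐ[volume] 0 := by
  have hint (y : EuclideanSpace ℝ (Fin n)) : IntegrableOn (fun x => |v x|) (Metric.ball y 1) :=
    Measure.integrableOn_of_bounded measure_ball_lt_top.ne (by simpa using hv.norm)
      (ae_restrict_of_ae (by simpa using hC))
  -- Without this bound the `⨆` defining `normX` could be the junk value `0`.
  have hbdd : BddAbove (range fun y => ∫ x in Metric.ball y 1, |v x|) := by
    refine ⟨C * volume.real (Metric.ball (0 : EuclideanSpace ℝ (Fin n)) 1), ?_⟩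
    rintro _ ⟨y, rfl⟩
    rw [← Measure.addHaar_real_ball_center volume y]
    refine (le_abs_self _).trans ?_
    exact norm_setIntegral_le_of_norm_le_const_ae (f := fun x => |v x|) measure_ball_lt_top
      (ae_restrict_of_ae (by simpa using hC))
  have hball (y : EuclideanSpace ℝ (Fin n)) :
      ∀ᵐ x ∂volume.restrict (Metric.ball y 1), v x = 0 := by
    have hle : ∫ x in Metric.ball y 1, |v x| ≤ 0 := h ▸ le_ciSup hbdd y
    have := (integral_eq_zero_iff_of_nonneg (fun x => abs_nonneg (v x)) (hint y)).1
      (hle.antisymm (integral_nonneg fun x => abs_nonneg _))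
    filter_upwards [this] with x hx
    simpa using hx
  refine measure_null_of_locally_null _ fun y _ => ⟨_, inter_mem_nhdsWithin _
    (Metric.ball_mem_nhds y one_pos), ?_⟩
  rw [← Measure.restrict_apply' measurableSet_ball]
  exact hball y

end NormX

theorem Real.sign_mul_self (r : ℝ) : Real.sign r * r = |r| := by
  rcases lt_trichotomy r 0 with hr | rfl | hr
  · rw [Real.sign_of_neg hr, abs_of_neg hr, neg_one_mul]
  · simp
  · rw [Real.sign_of_pos hr, abs_of_pos hr, one_mul]

theorem exists_sign_smul_sub_eq_abs_smul_add {V : Type*} [AddCommGroup V] [Module ℝ V]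
    {φ : ℝ → V} {b : ℝ} {c d : V} (haff : ∀ v ∈ Icc 0 b, φ v = v • c + d) (k : ℝ) :
    ∃ w : V, ∀ a ∈ Icc 0 b, Real.sign (a - k) • (φ a - φ k) = |a - k| • c + w := by
  by_cases hk₀ : k < 0
  · refine ⟨k • c + d - φ k, fun a ha => ?_⟩
    have hak : 0 < a - k := by linarith [ha.1]
    rw [Real.sign_of_pos hak, abs_of_pos hak, haff a ha]
    module
  by_cases hkb : b < k
  · refine ⟨φ k - (k • c + d), fun a ha => ?_⟩
    have hak : a - k < 0 := by linarith [ha.2]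
    rw [Real.sign_of_neg hak, abs_of_neg hak, haff a ha]
    module
  refine ⟨0, fun a ha => ?_⟩
  rw [haff a ha, haff k ⟨not_lt.1 hk₀, not_lt.1 hkb⟩, add_zero, add_sub_add_right_eq_sub,
    ← sub_smul, smul_smul, Real.sign_mul_self]

section Characteristics

variable {E : Type*} [NormedAddCommGroup E] [NormedSpace ℝ E]

def shear (c : E) : ℝ × E ≃ₜ ℝ × E where
  toFun p := (p.1, p.2 + p.1 • c)
  invFun p := (p.1, p.2 - p.1 • c)
  left_inv p := by simp
  right_inv p := by simp

@[simp]
theorem shear_apply (c : E) (p : ℝ × E) : shear c p = (p.1, p.2 + p.1 • c) := rfl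

theorem integrable_fderiv_apply [MeasurableSpace E] [OpensMeasurableSpace E] {μ : Measure E}
    [IsFiniteMeasureOnCompacts μ] {f : E → ℝ} (hf : ContDiff ℝ 1 f) (hfc : HasCompactSupport f)
    (v : E) : Integrable (fun x => fderiv ℝ f x v) μ :=
  ((hf.continuous_fderiv one_ne_zero).clm_apply continuous_const).integrable_of_hasCompactSupport
    (hfc.fderiv_apply ℝ v)

theorem integral_fderiv_apply_eq_zero [FiniteDimensional ℝ E] [MeasurableSpace E] [BorelSpace E]
    (μ : Measure E) [μ.IsAddHaarMeasure] {f : E → ℝ} (hf : ContDiff ℝ 1 f)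
    (hfc : HasCompactSupport f) (v : E) :
    ∫ x, fderiv ℝ f x v ∂μ = 0 := by
  have := integral_mul_fderiv_eq_neg_fderiv_mul_of_integrable (μ := μ) (f := fun _ => (1 : ℝ))
    (v := v) (by simp) (by simpa using integrable_fderiv_apply hf hfc v)
    (by simpa using hf.continuous.integrable_of_hasCompactSupport hfc)
    (fun x _ => differentiableAt_const 1) (fun x _ => hf.differentiable one_ne_zero x)
  simpa using this

theorem integral_fderiv_along_line_eq_zero {f : ℝ × E → ℝ} (hf : ContDiff ℝ 1 f)
    (hfc : HasCompactSupport f) (y c : E) : ∫ t, fderiv ℝ f (t, y + t • c) (1, c) = 0 := by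
  let γ : ℝ → ℝ × E := fun t => (t, y + t • c)
  have hγ (t : ℝ) : HasDerivAt γ (1, c) t :=
    (hasDerivAt_id t).prodMk (by simpa using ((hasDerivAt_id t).smul_const c).const_add y)
  have hfγ (t : ℝ) : fderiv ℝ (f ∘ γ) t 1 = fderiv ℝ f (t, y + t • c) (1, c) :=
    ((hf.differentiable one_ne_zero _).hasFDerivAt.comp_hasDerivAt t (hγ t)).deriv
  have hγc : IsClosedEmbedding γ :=
    Function.LeftInverse.isClosedEmbedding (f := Prod.fst) (fun _ => rfl) continuous_fst
      (by fun_prop)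
  simp_rw [← hfγ]
  exact integral_fderiv_apply_eq_zero volume (hf.comp (by fun_prop))
    (hfc.comp_isClosedEmbedding hγc) 1

variable [FiniteDimensional ℝ E] [MeasureSpace E] [BorelSpace E]
  [(volume : Measure E).IsAddHaarMeasure]

theorem measurePreserving_shear (c : E) : MeasurePreserving (shear c) :=
  (MeasurePreserving.id volume).skew_product (g := fun t x => x + t • c) (by fun_prop)
    (.of_forall fun t => (measurePreserving_add_right volume (t • c)).map_eq)

theorem quasiMeasurePreserving_sub_smul (c : E) :
    Measure.QuasiMeasurePreserving (fun p : ℝ × E => p.2 - p.1 • c) :=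
  Measure.quasiMeasurePreserving_snd.comp
    ((measurePreserving_shear c).symm (shear c).toMeasurableEquiv).quasiMeasurePreserving

theorem integrable_comp_sub_smul_mul {G : E → ℝ} (hG : AEStronglyMeasurable G) {C : ℝ}
    (hGC : ∀ᵐ y, |G y| ≤ C) (c : E) {D : ℝ × E → ℝ} (hD : Integrable D) :
    Integrable fun p : ℝ × E => G (p.2 - p.1 • c) * D p :=
  hD.bdd_mul (hG.comp_quasiMeasurePreserving (quasiMeasurePreserving_sub_smul c))
    ((quasiMeasurePreserving_sub_smul c).ae hGC)

theorem integral_comp_sub_smul_mul_fderiv_eq_zero {G : E → ℝ} (hG : AEStronglyMeasurable G)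
    {C : ℝ} (hGC : ∀ᵐ y, |G y| ≤ C) (c : E) {f : ℝ × E → ℝ} (hf : ContDiff ℝ 1 f)
    (hfc : HasCompactSupport f) :
    ∫ p : ℝ × E, G (p.2 - p.1 • c) * fderiv ℝ f p (1, c) = 0 := by
  have hint : Integrable (fun p : ℝ × E => G p.2 * fderiv ℝ f (p.1, p.2 + p.1 • c) (1, c))
      volume := by
    simpa [Function.comp_def] using (measurePreserving_shear c).integrable_comp_emb
      (shear c).measurableEmbedding |>.2
        (integrable_comp_sub_smul_mul hG hGC c (integrable_fderiv_apply hf hfc _))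
  rw [← (measurePreserving_shear c).integral_comp (shear c).measurableEmbedding]
  simp only [shear_apply, add_sub_cancel_right]
  rw [Measure.volume_eq_prod] at hint ⊢
  rw [integral_prod_symm _ hint]
  simp [integral_const_mul, integral_fderiv_along_line_eq_zero hf hfc]

theorem integral_entropy_travelingWave_eq_zero {φ : ℝ → E} {b : ℝ} {c d : E}
    (haff : ∀ v ∈ Icc 0 b, φ v = v • c + d) {u₀ : E → ℝ} (hu₀ : AEStronglyMeasurable u₀)
    (hrange : ∀ᵐ x, u₀ x ∈ Icc 0 b) (k : ℝ) {f : ℝ × E → ℝ} (hf : ContDiff ℝ 1 f)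
    (hfc : HasCompactSupport f) :
    ∫ p : ℝ × E, (|u₀ (p.2 - p.1 • c) - k| * fderiv ℝ f p (1, 0) +
      Real.sign (u₀ (p.2 - p.1 • c) - k) * fderiv ℝ f p (0, φ (u₀ (p.2 - p.1 • c)) - φ k)) =
      0 := by
  obtain ⟨w, hw⟩ := exists_sign_smul_sub_eq_abs_smul_add haff k
  have hpt (a : ℝ) (ha : a ∈ Icc 0 b) (L : ℝ × E →L[ℝ] ℝ) :
      |a - k| * L (1, 0) + Real.sign (a - k) * L (0, φ a - φ k) =
        |a - k| * L (1, c) + L (0, w) := by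
    have hL (s : ℝ) (v : E) : s * L (0, v) = L (0, s • v) := by
      rw [← smul_eq_mul, ← map_smul, Prod.smul_mk, smul_zero]
    have h1c : L (1, c) = L (1, 0) + L (0, c) := by
      rw [← map_add, Prod.mk_add_mk, add_zero, zero_add]
    have hsplit : ((0 : ℝ), |a - k| • c + w) = |a - k| • ((0 : ℝ), c) + (0, w) := by simp
    rw [hL, hw a ha, hsplit, map_add, map_smul, smul_eq_mul, h1c]
    ring
  have hG : AEStronglyMeasurable (fun y => |u₀ y - k|) :=
    (hu₀.sub aestronglyMeasurable_const).norm
  have hGC : ∀ᵐ y, |(|u₀ y - k|)| ≤ b + |k| := by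
    filter_upwards [hrange] with y hy
    rw [abs_abs]
    exact (abs_sub _ _).trans (by rw [abs_of_nonneg hy.1]; linarith [hy.2])
  calc _ = ∫ p : ℝ × E,
        (|u₀ (p.2 - p.1 • c) - k| * fderiv ℝ f p (1, c) + fderiv ℝ f p (0, w)) :=
        integral_congr_ae <| ((quasiMeasurePreserving_sub_smul c).ae hrange).mono
          fun p hp => hpt _ hp _
    _ = 0 := by
      rw [integral_add (integrable_comp_sub_smul_mul hG hGC c (integrable_fderiv_apply hf hfc _))
          (integrable_fderiv_apply hf hfc _),
        integral_comp_sub_smul_mul_fderiv_eq_zero hG hGC c hf hfc, zero_add]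
      exact integral_fderiv_apply_eq_zero (volume.prod volume) hf hfc _

end Characteristics

theorem traveling_wave_entropy_solution_no_decay_general {n : ℕ}
    (φ : ℝ → EuclideanSpace ℝ (Fin n))
    (b : ℝ) (c d : EuclideanSpace ℝ (Fin n))
    (haff : ∀ v ∈ Set.Icc (0 : ℝ) b, φ v = v • c + d)
    (u₀ : EuclideanSpace ℝ (Fin n) → ℝ) (hu₀ : MemLp u₀ ⊤ volume)
    (hrange : ∀ᵐ x : EuclideanSpace ℝ (Fin n), u₀ x ∈ Set.Icc (0 : ℝ) b)
    (u : ℝ → EuclideanSpace ℝ (Fin n) → ℝ)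
    (hu : u = fun t x => u₀ (x - t • c)) :
    (∀ k : ℝ, ∀ f : ℝ × EuclideanSpace ℝ (Fin n) → ℝ,
      ContDiff ℝ 1 f → HasCompactSupport f →
      tsupport f ⊆ Set.Ioi (0:ℝ) ×ˢ Set.univ → (∀ p, 0 ≤ f p) →
      0 ≤ ∫ p : ℝ × EuclideanSpace ℝ (Fin n),
        (|u p.1 p.2 - k| * fderiv ℝ f p ((1:ℝ), (0 : EuclideanSpace ℝ (Fin n))) +
          Real.sign (u p.1 p.2 - k) *
            fderiv ℝ f p ((0:ℝ), φ (u p.1 p.2) - φ k))) ∧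
    (∀ K : Set (EuclideanSpace ℝ (Fin n)), IsCompact K →
      Tendsto (fun t => ∫ x in K, |u t x - u₀ x|) (𝓝[>] (0:ℝ)) (𝓝 0)) ∧
    (∀ t : ℝ, 0 ≤ t → normX (u t) = normX u₀) ∧
    (¬ (u₀ =ᵐ[volume] (fun _ => (0:ℝ))) →
      ¬ Tendsto (fun t => normX (u t)) atTop (𝓝 0)) := by
  subst hu
  have hnormX (t : ℝ) : normX (fun x => u₀ (x - t • c)) = normX u₀ := normX_comp_sub u₀ (t • c)
  have hshift : Tendsto (fun t : ℝ => t • c) (𝓝[>] 0) (𝓝 0) :=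
    ((continuous_id.smul continuous_const).tendsto' 0 0 (zero_smul ℝ c)).mono_left
      nhdsWithin_le_nhds
  refine ⟨fun k f hf hfc _ _ =>
      (integral_entropy_travelingWave_eq_zero haff hu₀.aestronglyMeasurable hrange k hf hfc).ge,
    fun K hK => (tendsto_setIntegral_norm_comp_sub_sub (hu₀.locallyIntegrable le_top) hK).comp
      hshift,
    fun t _ => hnormX t, fun hne hlim => hne ?_⟩
  simp only [hnormX] at hlim
  refine ae_eq_zero_of_normX_eq_zero hu₀.aestronglyMeasurable (C := b) ?_
    (tendsto_nhds_unique tendsto_const_nhds hlim)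
  filter_upwards [hrange] with x hx
  exact (abs_of_nonneg hx.1).trans_le hx.2

/-- **Non-decaying traveling waves when the flux is affine near `0`.**
If the continuous flux `φ` satisfies `φ(v) = v • c + d` on `[0,b]` and
`0 ≤ u₀ ≤ b` a.e., then the traveling wave `u(t,x) = u₀(x − tc)` is an entropy solution
of `u_t + div_x φ(u) = 0` with initial data `u₀`: the Kruzhkov entropy inequalities hold,
`u(t,·) → u₀` in `L¹_loc` as `t → 0+`, and moreover `‖u(t,·)‖_X = ‖u₀‖_X` for all
`t ≥ 0`; consequently, if `u₀ ≠ 0` in `L¹_loc` then `‖u(t,·)‖_X` does not tend to `0`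
as `t → +∞`. -/
theorem traveling_wave_entropy_solution_no_decay {n : ℕ}
    (φ : ℝ → EuclideanSpace ℝ (Fin n)) (hφ : Continuous φ)
    (b : ℝ) (hb : 0 < b) (c d : EuclideanSpace ℝ (Fin n))
    (haff : ∀ v ∈ Set.Icc (0 : ℝ) b, φ v = v • c + d)
    (u₀ : EuclideanSpace ℝ (Fin n) → ℝ) (hu₀ : MemLp u₀ ⊤ volume)
    (hrange : ∀ᵐ x : EuclideanSpace ℝ (Fin n), u₀ x ∈ Set.Icc (0 : ℝ) b)
    (u : ℝ → EuclideanSpace ℝ (Fin n) → ℝ)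
    (hu : u = fun t x => u₀ (x - t • c)) :
    (∀ k : ℝ, ∀ f : ℝ × EuclideanSpace ℝ (Fin n) → ℝ,
      ContDiff ℝ 1 f → HasCompactSupport f →
      tsupport f ⊆ Set.Ioi (0:ℝ) ×ˢ Set.univ → (∀ p, 0 ≤ f p) →
      0 ≤ ∫ p : ℝ × EuclideanSpace ℝ (Fin n),
        (|u p.1 p.2 - k| * fderiv ℝ f p ((1:ℝ), (0 : EuclideanSpace ℝ (Fin n))) +
          Real.sign (u p.1 p.2 - k) *
            fderiv ℝ f p ((0:ℝ), φ (u p.1 p.2) - φ k))) ∧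
    (∀ K : Set (EuclideanSpace ℝ (Fin n)), IsCompact K →
      Tendsto (fun t => ∫ x in K, |u t x - u₀ x|) (𝓝[>] (0:ℝ)) (𝓝 0)) ∧
    (∀ t : ℝ, 0 ≤ t → normX (u t) = normX u₀) ∧
    (¬ (u₀ =ᵐ[volume] (fun _ => (0:ℝ))) →
      ¬ Tendsto (fun t => normX (u t)) atTop (𝓝 0)) :=
  traveling_wave_entropy_solution_no_decay_general φ b c d haff u₀ hu₀ hrange u hu
end
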